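/- arXiv:1404.4688 — 2 statements merged into one kernel-verified Lean document; each statement's English description precedes it below -/
import Mathlib

section
/- If the current vote a_i of voter i is not a possible winner, then every candidate that S_i(⃗a,r)-dominates a_i is a possible winner for i: D ⊆ W_i(⃗a, r). -/
open Finset

/-- The Plurality winner of a score vector: highest score, ties broken
lexicographically (smallest index wins). -/
noncomputable def winner {m : ℕ} [NeZero m] (s : Fin m → ℕ) : Fin m :=
  (Finset.univ.filter fun c => ∀ d, s d ≤ s c).min'
    (by
      obtain ⟨c, hc⟩ := Finite.exists_max s
      exact ⟨c, Finset.mem_filter.mpr ⟨Finset.mem_univ c, hc⟩⟩)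

/-- Add one vote for candidate `x` to score vector `s`. -/
def addVote {m : ℕ} (s : Fin m → ℕ) (x : Fin m) : Fin m → ℕ :=
  fun c => s c + if c = x then 1 else 0

/-- The winner after one additional vote for `x` is added to `s`. -/
noncomputable def outcome {m : ℕ} [NeZero m] (s : Fin m → ℕ) (x : Fin m) : Fin m :=
  winner (addVote s x)

/-- Action `b` S-beats action `c` (w.r.t. strict preference `pref`). -/
def Beats {m : ℕ} [NeZero m] (S : Set (Fin m → ℕ)) (pref : Fin m → Fin m → Prop)
    (b c : Fin m) : Prop :=
  ∃ s ∈ S, pref (outcome s b) (outcome s c)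

/-- Action `b` S-dominates action `c`. -/
def Dominates {m : ℕ} [NeZero m] (S : Set (Fin m → ℕ)) (pref : Fin m → Fin m → Prop)
    (b c : Fin m) : Prop :=
  Beats S pref b c ∧ ¬ Beats S pref c b

/-- ℓ1 distance between score vectors. -/
def l1 {m : ℕ} (s s' : Fin m → ℕ) : ℕ := ∑ c, Nat.dist (s c) (s' c)

/-- Scores of the profile `a` excluding voter `i`'s vote. -/
def scoreExc {m n : ℕ} (a : Fin n → Fin m) (i : Fin n) : Fin m → ℕ :=
  fun c => (Finset.univ.filter fun j => j ≠ i ∧ a j = c).card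

/-- Scores of the full profile `a`. -/
def scoreOf {m n : ℕ} (a : Fin n → Fin m) : Fin m → ℕ :=
  fun c => (Finset.univ.filter fun j => a j = c).card

/-- The accessible set `S_i(a, r)`: ℓ1 ball of radius `r` around the scores of the others. -/
def ball {m n : ℕ} (a : Fin n → Fin m) (i : Fin n) (r : ℕ) : Set (Fin m → ℕ) :=
  {s' | l1 s' (scoreExc a i) ≤ r}

/-- Possible winners for voter `i` at state `a` with uncertainty `r`. -/
noncomputable def PossW {m n : ℕ} [NeZero m] (a : Fin n → Fin m) (i : Fin n) (r : ℕ) :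
    Set (Fin m) :=
  {c | ∃ s' ∈ ball a i r, outcome s' c = c}

/-- `H̄_w(s)`: candidates within `w` votes of the winner's score. -/
noncomputable def Hbar {m : ℕ} [NeZero m] (w : ℕ) (s : Fin m → ℕ) : Set (Fin m) :=
  {c | s (winner s) ≤ s c + w}

lemma winner_mem {m : ℕ} [NeZero m] (s : Fin m → ℕ) :
    winner s ∈ Finset.univ.filter fun c => ∀ d, s d ≤ s c :=
  Finset.min'_mem _ _

lemma winner_le {m : ℕ} [NeZero m] (s : Fin m → ℕ) (d : Fin m) : s d ≤ s (winner s) :=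
  (Finset.mem_filter.mp (winner_mem s)).2 d

lemma winner_min {m : ℕ} [NeZero m] (s : Fin m → ℕ) (c : Fin m) (hc : ∀ d, s d ≤ s c) :
    winner s ≤ c :=
  Finset.min'_le _ c (Finset.mem_filter.mpr ⟨Finset.mem_univ c, hc⟩)

/-- If adding a vote for `x` does not make `x` the winner, the winner is unchanged. -/
lemma outcome_stable {m : ℕ} [NeZero m] (s : Fin m → ℕ) (x : Fin m)
    (h : outcome s x ≠ x) : outcome s x = winner s := by
  have hle : ∀ d, s d ≤ s (winner s) := winner_le s
  -- Step 1: s x < s (winner s)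
  have hxlt : s x + 1 ≤ s (winner s) := by
    rcases Nat.lt_or_ge (s x) (s (winner s)) with h' | h'
    · omega
    · exfalso; apply h
      have hxw : s x = s (winner s) := le_antisymm (hle x) h'
      by_contra hne0
      have hne : winner (addVote s x) ≠ x := hne0
      have h2 : addVote s x x ≤ addVote s x (winner (addVote s x)) :=
        winner_le (addVote s x) x
      have h3 : s (winner (addVote s x)) ≤ s (winner s) := hle _
      simp only [addVote, if_pos rfl, if_true, if_neg hne] at h2
      omega
  have hwx : winner s ≠ x := by
    intro he; rw [he] at hxlt; omega
  have hne : winner (addVote s x) ≠ x := h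
  -- winner s maximizes addVote s x
  have hwmax : ∀ d, addVote s x d ≤ addVote s x (winner s) := by
    intro d
    by_cases hd : d = x
    · subst hd
      simp only [addVote, if_pos rfl, if_true, if_neg hwx]
      omega
    · simp only [addVote, if_neg hd, if_neg hwx]
      have := hle d
      omega
  have hw'le : addVote s x (winner s) ≤ addVote s x (outcome s x) :=
    winner_le (addVote s x) (winner s)
  have hsw' : s (outcome s x) = s (winner s) := by
    have h1 : s (outcome s x) ≤ s (winner s) := hle _
    simp only [addVote, if_neg hwx, if_neg h] at hw'le
    omega
  have h1 : winner s ≤ outcome s x :=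
    winner_min s (outcome s x) (fun d => by rw [hsw']; exact hle d)
  have h2 : outcome s x ≤ winner s := winner_min (addVote s x) (winner s) hwmax
  exact le_antisymm h2 h1

/-- if the current vote of voter `i` is not a possible winner, every candidate
that locally dominates it is a possible winner. -/
theorem dominating_subset_possible_winners {m n : ℕ} [NeZero m] (r : ℕ)
    (a : Fin n → Fin m) (i : Fin n) (pref : Fin m → Fin m → Prop) (c : Fin m)
    (hnot : a i ∉ PossW a i r)
    (hdom : Dominates (ball a i r) pref c (a i)) :
    c ∈ PossW a i r := by
  by_contra hc
  obtain ⟨hbeats, hnbeats⟩ := hdom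
  obtain ⟨s', hs', hpref⟩ := hbeats
  apply hnbeats
  refine ⟨s', hs', ?_⟩
  have h1 : outcome s' (a i) ≠ a i := fun he => hnot ⟨s', hs', he⟩
  have h2 : outcome s' c ≠ c := fun he => hc ⟨s', hs', he⟩
  have : outcome s' c = outcome s' (a i) := by
    rw [outcome_stable s' c h2, outcome_stable s' (a i) h1]
  rw [this] at hpref
  rwa [this]
end

section
/- In an iterative Plurality voting process where all voters are of type r, start from the truthful profile, and move one at a time via local-dominance strategic responses (under any singleton scheduler), the process converges to a voting equilibrium in at most n(m−1) steps. -/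
open Finset

/-- The set of candidates locally dominating voter `i`'s current vote. -/
noncomputable def Dset {m n : ℕ} [NeZero m] (Q : Fin n → Fin m → Fin m → Prop) (r : ℕ)
    (a : Fin n → Fin m) (i : Fin n) : Set (Fin m) :=
  {c | Dominates (ball a i r) (Q i) c (a i)}

/-- `c` is voter `i`'s local-dominance strategic response at `a`:
`c` locally dominates `a i` and is `i`'s most preferred such candidate. -/
noncomputable def Resp {m n : ℕ} [NeZero m] (Q : Fin n → Fin m → Fin m → Prop) (r : ℕ)
    (a : Fin n → Fin m) (i : Fin n) (c : Fin m) : Prop :=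
  c ∈ Dset Q r a i ∧ ∀ d ∈ Dset Q r a i, d ≠ c → Q i c d

/-- One singleton strategic step: one voter moves to her strategic response. -/
noncomputable def StepRel {m n : ℕ} [NeZero m] (Q : Fin n → Fin m → Fin m → Prop) (r : ℕ)
    (a a' : Fin n → Fin m) : Prop :=
  ∃ i, (∀ j, j ≠ i → a' j = a j) ∧ a' i ≠ a i ∧ Resp Q r a i (a' i)

/-- A voting equilibrium: no voter votes for a locally dominated candidate. -/
noncomputable def Equilibrium {m n : ℕ} [NeZero m] (Q : Fin n → Fin m → Fin m → Prop) (r : ℕ)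
    (a : Fin n → Fin m) : Prop :=
  ∀ i, Dset Q r a i = ∅

/-- A truthful profile: each voter votes for her unique top candidate. -/
def Truthful {m n : ℕ} (Q : Fin n → Fin m → Fin m → Prop) (a : Fin n → Fin m) : Prop :=
  ∀ i, ∀ d, d ≠ a i → Q i (a i) d

/-!
The invariant (`NoBetterPossW`) is that no voter prefers to her vote a possible winner of her
view, i.e. a candidate she can elect by her vote after a change of at most `r` to the others'
scores. Under ℓ1 uncertainty this happens exactly when `r` extra votes for the candidate make it
win, so possible winners can be read off the scores.

Truthful profiles satisfy the invariant. The mover's response satisfies it by pivot arguments: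
walking through the ℓ1 ball one unit step at a time reaches a view where changing her vote
changes the outcome. Every other voter sees one vote move from `x`, not a possible winner of the
mover's view, to `y`, which is one; by the explicit description this creates no new possible
winner for her. Under the invariant a voter only moves to a candidate she likes less, so the
number of pairs `(i, d)` with `d` preferred by `i` to her vote grows at every step, and it is at
most `n (m - 1)`.
-/

section Scores

variable {m : ℕ}

def tieBreak (e c : Fin m) : ℕ := if e < c then 1 else 0

@[simp] lemma tieBreak_self (c : Fin m) : tieBreak c c = 0 := by simp [tieBreak]

lemma tieBreak_add_tieBreak_le (a b c : Fin m) :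
    tieBreak a b + tieBreak b c ≤ 1 + tieBreak a c := by
  simp only [tieBreak, Fin.lt_def]
  split_ifs <;> omega

lemma tieBreak_le_add_tieBreak (a b c : Fin m) :
    tieBreak a c ≤ tieBreak a b + tieBreak b c := by
  simp only [tieBreak, Fin.lt_def]
  split_ifs <;> omega

lemma addVote_self (s : Fin m → ℕ) (x : Fin m) : addVote s x x = s x + 1 := by
  simp [addVote]

lemma addVote_of_ne (s : Fin m → ℕ) {x e : Fin m} (h : e ≠ x) : addVote s x e = s e := by
  simp [addVote, h]

lemma le_addVote (s : Fin m → ℕ) (x e : Fin m) : s e ≤ addVote s x e := Nat.le_add_right _ _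

lemma l1_comm (s t : Fin m → ℕ) : l1 s t = l1 t s := by
  simp only [l1, Nat.dist_comm]

lemma dist_add_dist_le_l1 (s t : Fin m → ℕ) {e c : Fin m} (hec : e ≠ c) :
    Nat.dist (s e) (t e) + Nat.dist (s c) (t c) ≤ l1 s t := by
  have := Finset.sum_le_sum_of_subset (f := fun x => Nat.dist (s x) (t x))
    (subset_univ {e, c})
  rwa [Finset.sum_pair hec] at this

lemma add_le_add_of_l1_le {s t : Fin m → ℕ} {r : ℕ} (h : l1 s t ≤ r) {e c : Fin m}
    (hec : e ≠ c) {k j : ℕ} (hle : s e + k ≤ s c + j) : t e + k ≤ t c + j + r := by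
  have := dist_add_dist_le_l1 s t hec
  simp only [Nat.dist] at this
  omega

variable [NeZero m]

lemma winner_eq_iff {s : Fin m → ℕ} {c : Fin m} :
    winner s = c ↔ ∀ e, s e + tieBreak e c ≤ s c := by
  have hmax : ∀ e, s e ≤ s (winner s) := by
    have := Finset.min'_mem (Finset.univ.filter fun c => ∀ d, s d ≤ s c)
    exact (Finset.mem_filter.mp (this _)).2
  constructor
  · rintro rfl e
    unfold tieBreak
    split_ifs with he
    · by_contra! hlt
      exact not_le.mpr he (Finset.min'_le _ e (Finset.mem_filter.mpr
        ⟨mem_univ e, fun d => (hmax d).trans (by omega)⟩))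
    · simpa using hmax e
  · intro h
    have hc : ∀ e, s e ≤ s c := fun e => (Nat.le_add_right _ _).trans (h e)
    refine le_antisymm (Finset.min'_le _ c (Finset.mem_filter.mpr ⟨mem_univ c, hc⟩)) ?_
    refine Finset.le_min' _ _ _ fun e he => not_lt.mp fun hec => ?_
    have hle := h e
    have hge := (Finset.mem_filter.mp he).2 c
    rw [tieBreak, if_pos hec] at hle
    omega

lemma outcome_winner (s : Fin m → ℕ) : outcome s (winner s) = winner s := by
  have h := winner_eq_iff.mp (rfl : winner s = winner s)
  refine winner_eq_iff.mpr fun e => ?_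
  by_cases he : e = winner s
  · subst he; simp
  · rw [addVote_of_ne _ he, addVote_self]
    exact (h e).trans (Nat.le_succ _)

lemma outcome_eq_or_eq_winner (s : Fin m → ℕ) (x : Fin m) :
    outcome s x = x ∨ outcome s x = winner s := by
  refine or_iff_not_imp_left.mpr fun hx => (winner_eq_iff.mpr fun e => ?_).symm
  have h := winner_eq_iff.mp (rfl : outcome s x = outcome s x)
  have he := h e
  rw [addVote_of_ne _ hx] at he
  by_cases hex : e = x
  · subst hex; rw [addVote_self] at he; omega
  · rwa [addVote_of_ne _ hex] at he

lemma outcome_eq_of_l1_le_one {p q : Fin m → ℕ} {c : Fin m}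
    (hp : ∀ e, p e + tieBreak e c ≤ p c) (hpq : l1 p q ≤ 1) : outcome q c = c := by
  refine winner_eq_iff.mpr fun e => ?_
  by_cases hec : e = c
  · subst hec; simp
  · rw [addVote_of_ne _ hec, addVote_self]
    exact add_le_add_of_l1_le hpq hec (j := 0) (hp e)

end Scores

section Ball

variable {m : ℕ}

def l1Ball (v : Fin m → ℕ) (r : ℕ) : Set (Fin m → ℕ) := {s | l1 s v ≤ r}

lemma exists_l1_step_toward {s v : Fin m → ℕ} (hsv : s ≠ v) :
    ∃ q, l1 s q ≤ 1 ∧ l1 q v < l1 s v := by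
  obtain ⟨e, he⟩ := Function.ne_iff.mp hsv
  set q := Function.update s e (if s e < v e then s e + 1 else s e - 1)
  have hqe : Nat.dist (s e) (q e) = 1 := by
    simp only [q, Function.update_self, Nat.dist]
    split_ifs <;> omega
  refine ⟨q, ?_, ?_⟩
  · rw [l1, Finset.sum_eq_single e (fun x _ hx => by simp [q, hx]) (by simp), hqe]
  · refine Finset.sum_lt_sum (fun x _ => ?_) ⟨e, mem_univ e, ?_⟩
    · by_cases hx : x = e
      · subst hx
        simp only [q, Function.update_self, Nat.dist]
        split_ifs <;> omega
      · simp [q, hx]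
    · simp only [q, Function.update_self, Nat.dist]
      split_ifs <;> omega

/-- Walking from `s` straight to the centre `v` stays in the ball. -/
lemma exists_flip_of_not_center {v : Fin m → ℕ} {r : ℕ} (P : (Fin m → ℕ) → Prop)
    (hv : ¬ P v) (s : Fin m → ℕ) (hs : s ∈ l1Ball v r) (hPs : P s) :
    ∃ p ∈ l1Ball v r, ∃ q ∈ l1Ball v r, l1 p q ≤ 1 ∧ P p ∧ ¬ P q := by
  induction hN : l1 s v using Nat.strong_induction_on generalizing s with
  | _ N ih =>
    obtain ⟨q, hsq, hqv⟩ := exists_l1_step_toward (show s ≠ v by rintro rfl; exact hv hPs)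
    have hq : q ∈ l1Ball v r := le_trans hqv.le hs
    by_cases hPq : P q
    · exact ih _ (hN ▸ hqv) q hq hPq rfl
    · exact ⟨s, hs, q, hq, hsq, hPs, hPq⟩

lemma exists_flip {v : Fin m → ℕ} {r : ℕ} (P : (Fin m → ℕ) → Prop)
    {s s' : Fin m → ℕ} (hs : s ∈ l1Ball v r) (hs' : s' ∈ l1Ball v r)
    (hPs : P s) (hPs' : ¬ P s') :
    ∃ p ∈ l1Ball v r, ∃ q ∈ l1Ball v r, l1 p q ≤ 1 ∧ P p ∧ ¬ P q := by
  by_cases hv : P v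
  · obtain ⟨q, hq, p, hp, hqp, hnq, hnnp⟩ :=
      exists_flip_of_not_center (fun x => ¬ P x) (not_not.mpr hv) s' hs' hPs'
    exact ⟨p, hp, q, hq, by rwa [l1_comm], not_not.mp hnnp, hnq⟩
  · exact exists_flip_of_not_center P hv s hs hPs

variable [NeZero m]

def possibleWinners (v : Fin m → ℕ) (r : ℕ) : Set (Fin m) :=
  {c | ∃ s ∈ l1Ball v r, outcome s c = c}

lemma winner_mem_possibleWinners {v : Fin m → ℕ} {r : ℕ} {s : Fin m → ℕ}
    (hs : s ∈ l1Ball v r) : winner s ∈ possibleWinners v r :=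
  ⟨s, hs, outcome_winner s⟩

/-- Spending the whole budget `r` on raising `c` is optimal. -/
lemma mem_possibleWinners_iff {v : Fin m → ℕ} {r : ℕ} {c : Fin m} :
    c ∈ possibleWinners v r ↔ ∀ e, v e + tieBreak e c ≤ v c + r + 1 := by
  constructor
  · rintro ⟨s, hs, hsc⟩ e
    by_cases hec : e = c
    · subst hec; rw [tieBreak_self]; omega
    · have := winner_eq_iff.mp hsc e
      rw [addVote_of_ne _ hec, addVote_self] at this
      linarith [add_le_add_of_l1_le hs hec this]
  · intro h
    set s := Function.update v c (v c + r)
    refine ⟨s, ?_, winner_eq_iff.mpr fun e => ?_⟩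
    · show l1 s v ≤ r
      rw [l1, Finset.sum_eq_single c (fun x _ hx => by simp [s, hx]) (by simp)]
      simp [s, Nat.dist]
    · by_cases hec : e = c
      · subst hec; simp
      · rw [addVote_of_ne _ hec, addVote_self]
        simpa [s, hec, add_assoc] using h e

lemma exists_pivot {v : Fin m → ℕ} {r : ℕ} {b c : Fin m} (hbc : b ≠ c)
    (hb : b ∈ possibleWinners v r) (hc : c ∈ possibleWinners v r) :
    ∃ s ∈ l1Ball v r, outcome s b = b ∧ outcome s c ≠ b := by
  obtain ⟨sb, hsb, hob⟩ := hb
  obtain ⟨sc, hsc, hoc⟩ := hc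
  by_cases h : outcome sc b = b
  · exact ⟨sc, hsc, h, by rw [hoc]; exact hbc.symm⟩
  obtain ⟨p, hp, q, -, hpq, hpb, hqb⟩ := exists_flip (fun x => outcome x b = b) hsb hsc hob h
  refine ⟨p, hp, hpb, fun hpc => hqb (outcome_eq_of_l1_le_one (fun e => ?_) hpq)⟩
  have := winner_eq_iff.mp hpc e
  rw [addVote_of_ne _ hbc] at this
  by_cases hec : e = c
  · subst hec; rw [addVote_self] at this; omega
  · rwa [addVote_of_ne _ hec] at this

lemma exists_winner_eq_of_forall_outcome_eq {v : Fin m → ℕ} {r : ℕ} {d c : Fin m}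
    (hd : d ∈ possibleWinners v r) (hc : c ∈ possibleWinners v r)
    (hwin : ∀ s ∈ l1Ball v r, outcome s d = d → winner s = d) :
    ∃ s ∈ l1Ball v r, winner s = d ∧ outcome s c = c := by
  obtain ⟨sd, hsd, hod⟩ := hd
  obtain ⟨sc, hsc, hoc⟩ := hc
  by_cases h : winner sc = d
  · exact ⟨sc, hsc, h, hoc⟩
  obtain ⟨p, -, q, hq, hpq, hpd, hqd⟩ :=
    exists_flip (fun x => winner x = d) hsd hsc (hwin sd hsd hod) h
  exact absurd (hwin q hq (outcome_eq_of_l1_le_one (winner_eq_iff.mp hpd) hpq)) hqd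

end Ball

section Dominance

variable {m : ℕ} {pref : Fin m → Fin m → Prop}

def NoBetterIn (pref : Fin m → Fin m → Prop) (W : Set (Fin m)) (b : Fin m) : Prop :=
  ∀ e, pref e b → e ∉ W

lemma pref_of_mem_of_noBetterIn [IsStrictTotalOrder (Fin m) pref] {W : Set (Fin m)}
    {b c : Fin m} (hb : NoBetterIn pref W b) (hc : c ∈ W) (hcb : c ≠ b) : pref b c := by
  rcases trichotomous_of pref c b with h | h | h
  · exact absurd hc (hb c h)
  · exact absurd h hcb
  · exact h

variable [NeZero m] {v : Fin m → ℕ} {r : ℕ}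

lemma outcome_mem_possibleWinners {s : Fin m → ℕ} (hs : s ∈ l1Ball v r) (x : Fin m) :
    outcome s x ∈ possibleWinners v r := by
  rcases outcome_eq_or_eq_winner s x with h | h
  · exact ⟨s, hs, by rw [h, h]⟩
  · exact h ▸ winner_mem_possibleWinners hs

lemma outcome_eq_winner_of_not_mem {b : Fin m} (hb : b ∉ possibleWinners v r)
    {s : Fin m → ℕ} (hs : s ∈ l1Ball v r) : outcome s b = winner s :=
  (outcome_eq_or_eq_winner s b).resolve_left fun h => hb ⟨s, hs, h⟩

variable [IsStrictTotalOrder (Fin m) pref]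

lemma mem_of_beats {b c : Fin m} (hb : NoBetterIn pref (possibleWinners v r) b)
    (hcb : Beats (l1Ball v r) pref c b) : c ∈ possibleWinners v r := by
  obtain ⟨s, hs, hp⟩ := hcb
  rcases outcome_eq_or_eq_winner s c with hc | hc
  · exact ⟨s, hs, hc⟩
  rcases outcome_eq_or_eq_winner s b with hb' | hb'
  · rw [hc, hb'] at hp
    exact absurd (winner_mem_possibleWinners hs) (hb _ hp)
  · rw [hc, hb'] at hp
    exact absurd hp (irrefl _)

lemma not_beats_of_not_mem {a b : Fin m} (hb : b ∉ possibleWinners v r)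
    (ha : NoBetterIn pref (possibleWinners v r) a) : ¬ Beats (l1Ball v r) pref b a := by
  rintro ⟨s, hs, hp⟩
  rw [outcome_eq_winner_of_not_mem hb hs] at hp
  rcases outcome_eq_or_eq_winner s a with h | h <;> rw [h] at hp
  · exact ha _ hp (winner_mem_possibleWinners hs)
  · exact irrefl _ hp

lemma not_mem_of_dominates {b c : Fin m} (hb : NoBetterIn pref (possibleWinners v r) b)
    (hdom : Dominates (l1Ball v r) pref c b) : b ∉ possibleWinners v r := by
  intro hbW
  have hcb : c ≠ b := by rintro rfl; exact hdom.2 hdom.1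
  obtain ⟨s, hs, hsb, hsc⟩ := exists_pivot hcb.symm hbW (mem_of_beats hb hdom.1)
  refine hdom.2 ⟨s, hs, ?_⟩
  rw [hsb]
  exact pref_of_mem_of_noBetterIn hb (outcome_mem_possibleWinners hs c) hsc

/-- By induction, let `a` be a possible winner preferred to `c` such that no possible winner is
preferred to `a`. If some view elects `a` by the voter's vote but has another winner, then `a`
dominates `b`, against the choice of `c`. Otherwise some view has winner `a` and elects `c` by
her vote, and there `b` beats `c`. -/
lemma noBetterIn_of_isResponse {b c : Fin m} (hb : NoBetterIn pref (possibleWinners v r) b)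
    (hdom : Dominates (l1Ball v r) pref c b)
    (hmax : ∀ e, Dominates (l1Ball v r) pref e b → e ≠ c → pref c e) :
    NoBetterIn pref (possibleWinners v r) c := by
  have hbW := not_mem_of_dominates hb hdom
  have hcW := mem_of_beats hb hdom.1
  intro d
  induction d using (Finite.wellFounded_of_trans_of_irrefl pref).induction with
  | _ a ih =>
  intro hac haW
  have ha : NoBetterIn pref (possibleWinners v r) a := fun e hea =>
    ih e hea (_root_.trans hea hac)
  by_cases hpiv : ∃ s ∈ l1Ball v r, outcome s a = a ∧ winner s ≠ a
  · obtain ⟨s, hs, hoa, hwa⟩ := hpiv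
    have hab : Beats (l1Ball v r) pref a b := ⟨s, hs, by
      rw [hoa, outcome_eq_winner_of_not_mem hbW hs]
      exact pref_of_mem_of_noBetterIn ha (winner_mem_possibleWinners hs) hwa⟩
    have hca := hmax a ⟨hab, not_beats_of_not_mem hbW ha⟩ (ne_of_irrefl hac)
    exact asymm hac hca
  · push Not at hpiv
    obtain ⟨s, hs, hws, hocs⟩ := exists_winner_eq_of_forall_outcome_eq haW hcW hpiv
    exact hdom.2 ⟨s, hs, by rw [outcome_eq_winner_of_not_mem hbW hs, hws, hocs]; exact hac⟩

end Dominance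

section Transfer

variable {m : ℕ} [NeZero m]

lemma mem_possibleWinners_of_move {u : Fin m → ℕ} {r : ℕ} {x y b : Fin m}
    (hxy : x ≠ y) (hyb : y ≠ b)
    (hy : y ∈ possibleWinners (addVote u b) r)
    (hx : x ∉ possibleWinners (addVote u b) r) :
    y ∈ possibleWinners (addVote u x) r := by
  rw [mem_possibleWinners_iff] at hy hx ⊢
  push Not at hx
  obtain ⟨e', he'⟩ := hx
  intro e
  have he'y := hy e'
  rw [addVote_of_ne _ hyb] at he'y
  rw [addVote_of_ne _ hxy.symm]
  by_cases hex : e = x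
  · subst hex
    rw [addVote_self]
    have := le_addVote u b e
    have := tieBreak_add_tieBreak_le e' e y
    omega
  · have hey := hy e
    rw [addVote_of_ne _ hyb] at hey
    rw [addVote_of_ne _ hex]
    have := le_addVote u b e
    omega

lemma not_mem_possibleWinners_of_move {u : Fin m → ℕ} {r : ℕ} {x y b d : Fin m}
    (hxy : x ≠ y) (hdb : d ≠ b) (hdy : d ≠ y)
    (hd : d ∉ possibleWinners (addVote u x) r)
    (hy : y ∈ possibleWinners (addVote u b) r)
    (hx : x ∉ possibleWinners (addVote u b) r) :
    d ∉ possibleWinners (addVote u y) r := by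
  simp only [mem_possibleWinners_iff, not_forall, not_le] at hd hx hy ⊢
  obtain ⟨e, he⟩ := hd
  obtain ⟨e', he'⟩ := hx
  rw [addVote_of_ne _ hdy]
  by_cases hex : e = x
  · subst hex
    have hde : d ≠ e := by rintro rfl; rw [tieBreak_self] at he; omega
    rw [addVote_self, addVote_of_ne _ hde] at he
    have he'y := hy e'
    -- `x` itself beat `d`; now `e'`, which beat `x`, beats `d`, except in the tight case
    -- below, where `y` does
    by_cases htight : r = 0 ∧ e' = b ∧ e ≠ b ∧ e' ≠ y
    · obtain ⟨rfl, rfl, heb, hby⟩ := htight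
      refine ⟨y, ?_⟩
      rw [addVote_self]
      rw [addVote_self, addVote_of_ne _ heb] at he'
      rw [addVote_self, addVote_of_ne _ hby.symm] at he'y
      have := tieBreak_add_tieBreak_le e' e d
      have := tieBreak_le_add_tieBreak e' y d
      omega
    · refine ⟨e', ?_⟩
      have := tieBreak_add_tieBreak_le e' e d
      simp only [addVote] at he' ⊢
      split_ifs at he' ⊢ <;> omega
  · refine ⟨e, ?_⟩
    rw [addVote_of_ne _ hex] at he
    have := le_addVote u x d
    have := le_addVote u y e
    omega

end Transfer

section Profiles

variable {m n : ℕ}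

def scoreExcPair (a : Fin n → Fin m) (i j : Fin n) : Fin m → ℕ :=
  fun c => (univ.filter fun k => k ≠ i ∧ k ≠ j ∧ a k = c).card

lemma scoreExc_congr {a a' : Fin n → Fin m} {i : Fin n} (h : ∀ k, k ≠ i → a' k = a k) :
    scoreExc a' i = scoreExc a i := by
  funext c
  unfold scoreExc
  congr 1
  exact Finset.filter_congr fun k _ => and_congr_right fun hk => by rw [h k hk]

lemma scoreExcPair_congr {a a' : Fin n → Fin m} {i j : Fin n}
    (h : ∀ k, k ≠ j → a' k = a k) : scoreExcPair a' i j = scoreExcPair a i j := by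
  funext c
  unfold scoreExcPair
  congr 1
  exact Finset.filter_congr fun k _ => and_congr_right fun _ =>
    and_congr_right fun hk => by rw [h k hk]

lemma scoreExcPair_comm (a : Fin n → Fin m) (i j : Fin n) :
    scoreExcPair a i j = scoreExcPair a j i := by
  funext c
  unfold scoreExcPair
  congr 1
  exact Finset.filter_congr fun k _ => by tauto

lemma scoreExc_eq_addVote (a : Fin n → Fin m) {i j : Fin n} (hij : i ≠ j) :
    scoreExc a i = addVote (scoreExcPair a i j) (a j) := by
  funext c
  simp only [scoreExc, scoreExcPair, addVote]
  split_ifs with hc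
  · rw [← Finset.card_insert_of_notMem (a := j) (by simp)]
    congr 1
    ext k
    by_cases hkj : k = j
    · subst hkj; simp [hc, Ne.symm hij]
    · simp [hkj]
  · rw [add_zero]
    congr 1
    refine Finset.filter_congr fun k _ =>
      ⟨fun hk => ⟨hk.1, ?_, hk.2⟩, fun hk => ⟨hk.1, hk.2.2⟩⟩
    rintro rfl
    exact hc hk.2.symm

end Profiles

section Dynamics

variable {m n : ℕ} [NeZero m] {Q : Fin n → Fin m → Fin m → Prop} {r : ℕ}

lemma PossW_eq (a : Fin n → Fin m) (i : Fin n) (r : ℕ) :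
    PossW a i r = possibleWinners (scoreExc a i) r := rfl

def NoBetterPossW (Q : Fin n → Fin m → Fin m → Prop) (r : ℕ) (a : Fin n → Fin m) : Prop :=
  ∀ i, NoBetterIn (Q i) (PossW a i r) (a i)

lemma Truthful.noBetterPossW (hQ : ∀ i, IsStrictTotalOrder (Fin m) (Q i)) {a : Fin n → Fin m}
    (h : Truthful Q a) : NoBetterPossW Q r a := fun i d hd _ =>
  have := hQ i
  asymm hd (h i d (ne_of_irrefl hd))

/-- The mover keeps her own view; every other voter sees one vote moved from `a j` to `a' j`. -/
lemma StepRel.noBetterPossW (hQ : ∀ i, IsStrictTotalOrder (Fin m) (Q i))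
    {a a' : Fin n → Fin m} (hstep : StepRel Q r a a') (hinv : NoBetterPossW Q r a) :
    NoBetterPossW Q r a' := by
  obtain ⟨j, hoff, hne, hdom, hmax⟩ := hstep
  have := hQ j
  intro i
  by_cases hij : i = j
  · subst hij
    rw [PossW_eq, scoreExc_congr hoff]
    exact noBetterIn_of_isResponse (hinv i) hdom hmax
  have := hQ i
  intro d hd
  rw [hoff i hij] at hd
  rw [PossW_eq, scoreExc_eq_addVote a' hij, scoreExcPair_congr hoff]
  have hx := not_mem_of_dominates (hinv j) hdom
  have hy := mem_of_beats (hinv j) hdom.1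
  have hd' := hinv i d hd
  rw [scoreExc_eq_addVote a (Ne.symm hij), scoreExcPair_comm] at hx hy
  rw [PossW_eq, scoreExc_eq_addVote a hij] at hd'
  by_cases hdy : d = a' j
  · subst hdy
    exact absurd (mem_possibleWinners_of_move hne.symm (ne_of_irrefl hd) hy hx) hd'
  · exact not_mem_possibleWinners_of_move hne.symm (ne_of_irrefl hd) hdy hd' hy hx

open Classical in
noncomputable def prefCount (Q : Fin n → Fin m → Fin m → Prop) (a : Fin n → Fin m) : ℕ :=
  ∑ i, (univ.filter fun d => Q i d (a i)).card

omit [NeZero m] in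
lemma prefCount_le (hQ : ∀ i, IsStrictTotalOrder (Fin m) (Q i)) (a : Fin n → Fin m) :
    prefCount Q a ≤ n * (m - 1) := by
  classical
  have hle : ∀ i ∈ univ, (univ.filter fun d => Q i d (a i)).card ≤ m - 1 := fun i _ => by
    have := hQ i
    calc (univ.filter fun d => Q i d (a i)).card ≤ (univ.erase (a i)).card :=
          Finset.card_le_card fun d hd => Finset.mem_erase.mpr
            ⟨ne_of_irrefl (Finset.mem_filter.mp hd).2, mem_univ d⟩
      _ = m - 1 := by simp
  simpa [prefCount] using Finset.sum_le_card_nsmul _ _ _ hle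

omit [NeZero m] in
lemma prefCount_lt_of_pref (hQ : ∀ i, IsStrictTotalOrder (Fin m) (Q i)) {a a' : Fin n → Fin m}
    {j : Fin n} (hoff : ∀ k, k ≠ j → a' k = a k) (hj : Q j (a j) (a' j)) :
    prefCount Q a < prefCount Q a' := by
  classical
  have := hQ j
  have hsub : (univ.filter fun d => Q j d (a j)) ⊆ univ.filter fun d => Q j d (a' j) :=
    Finset.monotone_filter_right _ fun _ _ hd => _root_.trans hd hj
  refine Finset.sum_lt_sum (fun k _ => ?_) ⟨j, mem_univ j, Finset.card_lt_card ?_⟩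
  · by_cases hkj : k = j
    · subst hkj
      exact Finset.card_le_card hsub
    · rw [hoff k hkj]
  · exact (Finset.ssubset_iff_of_subset hsub).mpr
      ⟨a j, by simp [hj], by simpa using irrefl (a j)⟩

lemma StepRel.prefCount_lt (hQ : ∀ i, IsStrictTotalOrder (Fin m) (Q i)) {a a' : Fin n → Fin m}
    (hstep : StepRel Q r a a') (hinv : NoBetterPossW Q r a) :
    prefCount Q a < prefCount Q a' := by
  obtain ⟨j, hoff, hne, hdom, -⟩ := hstep
  have := hQ j
  exact prefCount_lt_of_pref hQ hoff
    (pref_of_mem_of_noBetterIn (hinv j) (mem_of_beats (hinv j) hdom.1) hne)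

end Dynamics

lemma le_apply_of_lt_apply_succ {f : ℕ → ℕ} {T : ℕ} (h : ∀ t, t < T → f t < f (t + 1)) :
    T ≤ f T := by
  induction T with
  | zero => exact Nat.zero_le _
  | succ T ih =>
    have := ih fun t ht => h t (by omega)
    have := h T (by omega)
    omega

/-- from the truthful state, any sequence of singleton local-dominance
strategic steps has length at most `n (m - 1)`; hence the iterative process converges to a
voting equilibrium within `n (m - 1)` steps. -/
theorem convergence_from_truth {m n : ℕ} [NeZero m] (Q : Fin n → Fin m → Fin m → Prop)
    (hQ : ∀ i, IsStrictTotalOrder (Fin m) (Q i)) (r T : ℕ)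
    (seq : ℕ → Fin n → Fin m)
    (h0 : Truthful Q (seq 0))
    (hstep : ∀ t, t < T → StepRel Q r (seq t) (seq (t + 1))) :
    T ≤ n * (m - 1) := by
  have hinv : ∀ t, t ≤ T → NoBetterPossW Q r (seq t) := by
    intro t ht
    induction t with
    | zero => exact h0.noBetterPossW hQ
    | succ t ih => exact (hstep t ht).noBetterPossW hQ (ih (by omega))
  calc T ≤ prefCount Q (seq T) :=
        le_apply_of_lt_apply_succ fun t ht => (hstep t ht).prefCount_lt hQ (hinv t ht.le)
    _ ≤ n * (m - 1) := prefCount_le hQ _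
end
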